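/- Let x ∈ (1/2, 1) and let n ≥ 1 be an integer such that the iterates φ^j(x) lie in the open interval (1/2, 1) for all j = 0, 1, …, n−1. Then φ^n(x) = 2·[(1 − (−2)^n)/3 − (−2)^(n−1)·x]. -/
import Mathlib


/-- The paradoxical map: `φ(x) = x/(1-x)` for `x ∈ (0, 1/2)`, `φ(x) = 2(1-x)` for
`x ∈ [1/2, 1]`, and `φ(x) = 0` otherwise (in particular `φ(0) = 0`). -/
noncomputable def psi (x : ℝ) : ℝ :=
  if 0 < x ∧ x < 1 / 2 then x / (1 - x)
  else if 1 / 2 ≤ x ∧ x ≤ 1 then 2 * (1 - x)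
  else 0

lemma psi_mid (y : ℝ) (hy : y ∈ Set.Ioo (1 / 2 : ℝ) 1) : psi y = 2 * (1 - y) := by
  obtain ⟨h1, h2⟩ := hy
  unfold psi
  rw [if_neg (by intro ⟨_, h⟩; linarith), if_pos ⟨le_of_lt h1, le_of_lt h2⟩]

/-- If `x ∈ (1/2, 1)` and `n ≥ 1` is such that `φ^j(x) ∈ (1/2, 1)` for all
`j = 0, 1, …, n−1`, then `φ^n(x) = 2[(1 − (−2)^n)/3 − (−2)^(n−1) x]`. -/
theorem stmt_8 (x : ℝ) (hx : x ∈ Set.Ioo (1 / 2 : ℝ) 1) (n : ℕ) (hn : 1 ≤ n)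
    (h : ∀ j < n, psi^[j] x ∈ Set.Ioo (1 / 2 : ℝ) 1) :
    psi^[n] x = 2 * ((1 - (-2 : ℝ) ^ n) / 3 - (-2 : ℝ) ^ (n - 1) * x) := by
  induction n with
  | zero => omega
  | succ m ih =>
    rcases Nat.eq_zero_or_pos m with hm | hm
    · subst hm
      simp [psi_mid x hx]
      ring
    · have hstep : psi^[m + 1] x = psi (psi^[m] x) :=
        Function.iterate_succ_apply' psi m x
      rw [hstep, psi_mid _ (h m (by omega)),
        ih hm (fun j hj => h j (by omega))]
      have hm1 : m - 1 + 1 = m := Nat.succ_pred_eq_of_pos hm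
      have : (-2 : ℝ) ^ m = (-2 : ℝ) ^ (m - 1) * (-2) := by
        rw [← pow_succ, hm1]
      have h2 : (-2 : ℝ) ^ (m + 1) = (-2 : ℝ) ^ (m - 1) * 4 := by
        rw [show m + 1 = (m - 1) + 2 by omega, pow_add]; ring
      simp only [Nat.add_sub_cancel]
      rw [this, h2]
      ring
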